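/- arXiv:1410.3657 — 6 statements merged into one kernel-verified Lean document; each statement's English description precedes it below -/
import Mathlib

section
/- Let N ≥ 1, ε > 0, and fix k with 1 ≤ k ≤ N; let E_kk ∈ M_N(ℂ) be the matrix unit with 1 in entry (k,k) and 0 elsewhere. Suppose Φ, ω₁ : ℝ × ℝ → M_N(ℂ) (variables (t,x)) are such that Φ(t,x) is invertible for all (t,x), Φ and ω₁ are differentiable in t, and for all (t,x): ε ∂_t Φ(t,x) · Φ(t,x)⁻¹ = ω₁(t,x) E_kk − E_kk ω₁(t,x+ε) and ε ∂_t ω₁(t,x) = − Φ(t,x) E_kk Φ(t,x−ε)⁻¹. Then the matrix-valued multicomponent Toda equation holds: ε ∂_t ( ε ∂_t Φ(t,x) · Φ(t,x)⁻¹ ) = E_kk Φ(t,x+ε) E_kk Φ(t,x)⁻¹ − Φ(t,x) E_kk Φ(t,x−ε)⁻¹ E_kk for all (t,x). -/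
/-! The first equation rewrites `ε Φₜ Φ⁻¹` as `ω₁(x) E - E ω₁(x+ε)`, whose time derivative is
`ω₁ₜ(x) E - E ω₁ₜ(x+ε)`; the second equation, taken at `x` and at `x + ε`, expresses both
terms through `Φ`. -/

open Matrix

section EntrywiseDeriv

variable {𝕜 𝔸 : Type*} [NontriviallyNormedField 𝕜] [NormedRing 𝔸] [NormedAlgebra 𝕜 𝔸]
  {l m n : Type*} [Fintype m] {t : 𝕜}

theorem Matrix.hasDerivAt_mul_const_apply {A : 𝕜 → Matrix l m 𝔸} {A' : Matrix l m 𝔸}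
    (hA : ∀ i j, HasDerivAt (fun s => A s i j) (A' i j) t) (B : Matrix m n 𝔸) (i : l) (j : n) :
    HasDerivAt (fun s => (A s * B) i j) ((A' * B) i j) t := by
  simp only [mul_apply]
  exact HasDerivAt.fun_sum fun r _ => (hA i r).mul_const _

theorem Matrix.hasDerivAt_const_mul_apply {A : 𝕜 → Matrix m n 𝔸} {A' : Matrix m n 𝔸}
    (hA : ∀ i j, HasDerivAt (fun s => A s i j) (A' i j) t) (B : Matrix l m 𝔸) (i : l) (j : n) :
    HasDerivAt (fun s => (B * A s) i j) ((B * A') i j) t := by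
  simp only [mul_apply]
  exact HasDerivAt.fun_sum fun r _ => (hA r j).const_mul _

end EntrywiseDeriv

theorem multicomponent_toda_equation_general
    (N : ℕ) (ε : ℝ) (hε : 0 < ε) (k : Fin N)
    (Φ ω₁ Φₜ ω₁ₜ : ℝ → ℝ → Matrix (Fin N) (Fin N) ℂ)
    (hωd : ∀ (t x : ℝ) (i j : Fin N),
      HasDerivAt (fun s : ℝ => ω₁ s x i j) (ω₁ₜ t x i j) t)
    (h1 : ∀ t x : ℝ,
      (ε • Φₜ t x) * (Φ t x)⁻¹
        = ω₁ t x * single k k 1 - single k k 1 * ω₁ t (x + ε))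
    (h2 : ∀ t x : ℝ,
      ε • ω₁ₜ t x = -(Φ t x * single k k 1 * (Φ t (x - ε))⁻¹)) :
    ∀ (t x : ℝ) (i j : Fin N),
      HasDerivAt (fun s : ℝ => ((ε • Φₜ s x) * (Φ s x)⁻¹) i j)
        (((ε⁻¹ • (single k k 1 * Φ t (x + ε) * single k k 1 * (Φ t x)⁻¹
            - Φ t x * single k k 1 * (Φ t (x - ε))⁻¹ * single k k 1) :
          Matrix (Fin N) (Fin N) ℂ)) i j)
        t := by
  intro t x i j
  set E : Matrix (Fin N) (Fin N) ℂ := single k k 1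
  have hω : ω₁ₜ t x * E - E * ω₁ₜ t (x + ε)
      = ε⁻¹ • (E * Φ t (x + ε) * E * (Φ t x)⁻¹ - Φ t x * E * (Φ t (x - ε))⁻¹ * E) := by
    rw [eq_inv_smul_iff₀ hε.ne', smul_sub, ← smul_mul_assoc, ← mul_smul_comm, h2, h2,
      add_sub_cancel_right]
    noncomm_ring
  simp_rw [h1, ← hω, Matrix.sub_apply]
  exact (hasDerivAt_mul_const_apply (hωd t x) E i j).sub
    (hasDerivAt_const_mul_apply (hωd t (x + ε)) E i j)

theorem multicomponent_toda_equation
    (N : ℕ) (hN : 1 ≤ N) (ε : ℝ) (hε : 0 < ε) (k : Fin N)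
    (Φ ω₁ Φₜ ω₁ₜ : ℝ → ℝ → Matrix (Fin N) (Fin N) ℂ)
    (hΦinv : ∀ t x : ℝ, IsUnit (Φ t x))
    (hΦd : ∀ (t x : ℝ) (i j : Fin N),
      HasDerivAt (fun s : ℝ => Φ s x i j) (Φₜ t x i j) t)
    (hωd : ∀ (t x : ℝ) (i j : Fin N),
      HasDerivAt (fun s : ℝ => ω₁ s x i j) (ω₁ₜ t x i j) t)
    (h1 : ∀ t x : ℝ,
      (ε • Φₜ t x) * (Φ t x)⁻¹
        = ω₁ t x * single k k 1 - single k k 1 * ω₁ t (x + ε))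
    (h2 : ∀ t x : ℝ,
      ε • ω₁ₜ t x = -(Φ t x * single k k 1 * (Φ t (x - ε))⁻¹)) :
    ∀ (t x : ℝ) (i j : Fin N),
      HasDerivAt (fun s : ℝ => ((ε • Φₜ s x) * (Φ s x)⁻¹) i j)
        (((ε⁻¹ • (single k k 1 * Φ t (x + ε) * single k k 1 * (Φ t x)⁻¹
            - Φ t x * single k k 1 * (Φ t (x - ε))⁻¹ * single k k 1) :
          Matrix (Fin N) (Fin N) ℂ)) i j)
        t :=
  multicomponent_toda_equation_general N ε hε k Φ ω₁ Φₜ ω₁ₜ hωd h1 h2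
end

section
/- Let B = Σ_{n=0}^{M} b_n(x)Λⁿ be a matrix difference operator with only nonnegative powers of Λ, and let f, g : ℝ → M_N(ℂ). Then the negative part of the composed operator B ∘ f ∘ Γ ∘ g equals (B(f)) ∘ Γ ∘ g, where B(f) : ℝ → M_N(ℂ) is the function B(f)(x) = Σ_{n=0}^{M} b_n(x) f(x+nε). Equivalently, for every m ≥ 1 the coefficient of Λ^{−m} in B ∘ f ∘ Γ ∘ g equals B(f)(x) · g(x−mε). -/
open Matrix

noncomputable section

/-- `N × N` complex matrices. -/
abbrev Mat (N : ℕ) := Matrix (Fin N) (Fin N) ℂ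

/-- A formal matrix difference operator `A = Σₖ aₖ(x) Λᵏ`, represented by its
family of coefficient functions: `A k x` is the coefficient of `Λᵏ` at the
point `x`.  `Λ` is the shift `(Λ g)(x) = g(x + ε)`. -/
abbrev DOp (N : ℕ) := ℤ → ℝ → Mat N

/-- Product of difference operators, determined by
`(a(x)Λⁱ)·(b(x)Λʲ) = a(x) b(x+iε) Λ^{i+j}`; the coefficient of `Λᵏ` in `A·B`
is `Σᶠ i, A i (x) * B (k−i) (x+iε)` (a finite sum in all cases considered). -/
noncomputable def opMul (ε : ℝ) {N : ℕ} (A B : DOp N) : DOp N :=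
  fun k x => ∑ᶠ i : ℤ, A i x * B (k - i) (x + (i : ℝ) * ε)

/-- A function `f : ℝ → Mat N`, viewed as the degree-zero operator `f(x)Λ⁰`. -/
def ofFun {N : ℕ} (f : ℝ → Mat N) : DOp N := fun k x => if k = 0 then f x else 0

/-- The negative part `A₋ = Σ_{k<0} aₖ Λᵏ`. -/
def opNegPart {N : ℕ} (A : DOp N) : DOp N := fun k x => if k < 0 then A k x else 0

/-- The nonnegative part `A₊ = Σ_{k≥0} aₖ Λᵏ`. -/
def opPosPart {N : ℕ} (A : DOp N) : DOp N := fun k x => if 0 ≤ k then A k x else 0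

/-!
STATEMENT 2: for a matrix difference operator `B = Σ_{n=0}^{M} bₙ(x)Λⁿ` with only
nonnegative powers of `Λ` and functions `f, g : ℝ → Mat N`, the negative part of
`B ∘ f ∘ Γ ∘ g` equals `(B(f)) ∘ Γ ∘ g`, where `Γ = Λ⁻¹(1−Λ⁻¹)⁻¹ = Σ_{s≥1} Λ⁻ˢ`
and `B(f)(x) = Σ_{n=0}^{M} bₙ(x) f(x+nε)`; equivalently, for every `m ≥ 1` the
coefficient of `Λ^{−m}` in `B ∘ f ∘ Γ ∘ g` equals `B(f)(x) · g(x−mε)`.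
-/

lemma mul_ofFun_apply (ε : ℝ) {N : ℕ} (A : DOp N) (g : ℝ → Mat N) (k : ℤ) (x : ℝ) :
    opMul ε A (ofFun g) k x = A k x * g (x + (k : ℝ) * ε) := by
  unfold opMul ofFun
  rw [finsum_eq_single _ k (by
    intro j hj
    have : k - j ≠ 0 := sub_ne_zero.mpr (Ne.symm hj)
    simp [this])]
  simp

theorem negPart_B_f_Gamma_g
    (ε : ℝ) (hε : 0 < ε) (N : ℕ) (hN : 1 ≤ N) (M : ℕ)
    (b : ℕ → ℝ → Mat N) (f g : ℝ → Mat N) :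
    let B : DOp N := fun k x => if 0 ≤ k ∧ k ≤ (M : ℤ) then b k.toNat x else 0
    let Gam : DOp N := fun k _ => if k < 0 then 1 else 0
    let Bf : ℝ → Mat N := fun x => ∑ n ∈ Finset.range (M + 1), b n x * f (x + (n : ℝ) * ε)
    opNegPart (opMul ε (opMul ε (opMul ε B (ofFun f)) Gam) (ofFun g))
        = opMul ε (opMul ε (ofFun Bf) Gam) (ofFun g)
      ∧ ∀ m : ℤ, 1 ≤ m → ∀ x : ℝ,
        opMul ε (opMul ε (opMul ε B (ofFun f)) Gam) (ofFun g) (-m) x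
          = Bf x * g (x - (m : ℝ) * ε) := by
  intro B Gam Bf
  have hBF : opMul ε B (ofFun f) = fun k x => B k x * f (x + (k : ℝ) * ε) := by
    funext k x; exact mul_ofFun_apply ε B f k x
  -- key : for k < 0, (B f Γ) coefficient = Bf x
  have key : ∀ (k : ℤ), k < 0 → ∀ (x : ℝ),
      opMul ε (opMul ε B (ofFun f)) Gam k x = Bf x := by
    intro k hk x
    rw [hBF]
    show (∑ᶠ i : ℤ, (B i x * f (x + (i : ℝ) * ε)) * Gam (k - i) (x + (i : ℝ) * ε)) = Bf x
    set s : Finset ℤ := (Finset.range (M + 1)).image (Nat.cast : ℕ → ℤ) with hs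
    rw [finsum_eq_finset_sum_of_support_subset _ (s := s) (by
      intro i hi
      simp only [Function.mem_support] at hi
      have hB : B i x ≠ 0 := by
        intro h; apply hi; simp [h]
      have hcond : 0 ≤ i ∧ i ≤ (M : ℤ) := by
        by_contra h; apply hB; simp only [B, if_neg h]
      simp only [hs, Finset.coe_image, Set.mem_image, Finset.mem_coe, Finset.mem_range]
      exact ⟨i.toNat, by omega, by omega⟩)]
    rw [hs, Finset.sum_image (by intro a _ b _ h; exact_mod_cast h)]
    apply Finset.sum_congr rfl
    intro n hn
    simp only [Finset.mem_range] at hn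
    have h1 : B (n : ℤ) x = b n x := by
      simp only [B]
      rw [if_pos ⟨Int.ofNat_nonneg n, by exact_mod_cast Nat.lt_succ_iff.mp hn⟩]
      simp
    have h2 : Gam (k - (n : ℤ)) (x + (n : ℝ) * ε) = 1 := by
      simp only [Gam]
      rw [if_pos (by omega)]
    rw [h1, h2, mul_one]
    norm_cast
  have hRHSmid : ∀ (k : ℤ) (x : ℝ),
      opMul ε (ofFun Bf) Gam k x = if k < 0 then Bf x else 0 := by
    intro k x
    show (∑ᶠ i : ℤ, ofFun Bf i x * Gam (k - i) (x + (i : ℝ) * ε)) = _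
    rw [finsum_eq_single _ 0 (by
      intro j hj; simp [ofFun, hj])]
    simp only [ofFun, if_pos rfl, Gam, sub_zero]
    by_cases h : k < 0 <;> simp [h]
  constructor
  · funext k x
    simp only [opNegPart]
    rw [mul_ofFun_apply, mul_ofFun_apply, hRHSmid]
    by_cases h : k < 0
    · rw [if_pos h, if_pos h, key k h x]
    · rw [if_neg h, if_neg h, zero_mul]
  · intro m hm x
    rw [mul_ofFun_apply, key (-m) (by omega) x]
    push_cast
    ring_nf
end
end

section
/- Let B = Σ_{n=0}^{M} b_n(x)Λⁿ be a matrix difference operator with only nonnegative powers of Λ, and let f, g : ℝ → M_N(ℂ). Then the negative part of the composed operator f ∘ Γ ∘ g ∘ B equals f ∘ Γ ∘ B*(g), where B*(g) : ℝ → M_N(ℂ) is the function B*(g)(x) = Σ_{n=0}^{M} g(x−nε) b_n(x−nε). Equivalently, for every m ≥ 1 the coefficient of Λ^{−m} in f ∘ Γ ∘ g ∘ B equals f(x) · B*(g)(x−mε). -/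
open Matrix

noncomputable section

/-! For `k < 0` the coefficient of `Λᵏ` in `f Γ g` is `f(x) g(x + kε)`, and it vanishes for
`k ≥ 0`. Multiplying on the right by `B = Σ_{n ≤ M} bₙ Λⁿ` gives, for `k < 0`, the coefficient
`Σₙ f(x) g(x + (k-n)ε) bₙ(x + (k-n)ε)`: every index `k - n` is again negative, so no term is
lost, and the sum is `f(x) B*(g)(x + kε)`. -/

def polyOp {N : ℕ} (M : ℕ) (b : ℕ → ℝ → Mat N) : DOp N :=
  fun k x => if 0 ≤ k ∧ k ≤ (M : ℤ) then b k.toNat x else 0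

def gammaOp (N : ℕ) : DOp N := fun k _ => if k < 0 then 1 else 0

def polyOpAdjoint (ε : ℝ) {N : ℕ} (M : ℕ) (b : ℕ → ℝ → Mat N) (g : ℝ → Mat N) :
    ℝ → Mat N :=
  fun x => ∑ n ∈ Finset.range (M + 1), g (x - (n : ℝ) * ε) * b n (x - (n : ℝ) * ε)

section

variable (ε : ℝ) {N : ℕ}

lemma opMul_ofFun_apply (A : DOp N) (h : ℝ → Mat N) (k : ℤ) (x : ℝ) :
    opMul ε A (ofFun h) k x = A k x * h (x + (k : ℝ) * ε) := by
  unfold opMul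
  rw [finsum_eq_single _ k]
  · simp [ofFun]
  · intro i hi
    simp [ofFun, sub_ne_zero.mpr (Ne.symm hi)]

lemma ofFun_opMul_apply (h : ℝ → Mat N) (A : DOp N) (k : ℤ) (x : ℝ) :
    opMul ε (ofFun h) A k x = h x * A k x := by
  unfold opMul
  rw [finsum_eq_single _ 0]
  · simp [ofFun]
  · intro i hi
    simp [ofFun, hi]

lemma ofFun_opMul_gammaOp_apply (f : ℝ → Mat N) (k : ℤ) (x : ℝ) :
    opMul ε (ofFun f) (gammaOp N) k x = if k < 0 then f x else 0 := by
  rw [ofFun_opMul_apply]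
  split_ifs with hk <;> simp [gammaOp, hk]

lemma opMul_polyOp_apply (A : DOp N) (M : ℕ) (b : ℕ → ℝ → Mat N) (k : ℤ) (x : ℝ) :
    opMul ε A (polyOp M b) k x
      = ∑ n ∈ Finset.range (M + 1), A (k - n) x * b n (x + ((k - n : ℤ) : ℝ) * ε) := by
  have hinj : Set.InjOn (fun n : ℕ => k - n) ↑(Finset.range (M + 1)) := by
    intro a _ c _ h
    simp only at h
    omega
  have hsupp : Function.support (fun i : ℤ => A i x * polyOp M b (k - i) (x + i * ε))
      ⊆ ↑((Finset.range (M + 1)).image fun n : ℕ => k - n) := by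
    intro i hi
    by_contra hmem
    have hout : ¬ (0 ≤ k - i ∧ k - i ≤ (M : ℤ)) := fun hin =>
      hmem (Finset.mem_image.mpr ⟨(k - i).toNat, Finset.mem_range.mpr (by omega), by omega⟩)
    exact hi (by simp only [polyOp, if_neg hout, mul_zero])
  unfold opMul
  rw [finsum_eq_finsetSum_of_support_subset _ hsupp, Finset.sum_image hinj]
  refine Finset.sum_congr rfl fun n hn => ?_
  have hn : n ≤ M := Nat.lt_succ_iff.mp (Finset.mem_range.mp hn)
  simp [polyOp, hn]

lemma opMul_fGammaG_polyOp_apply_of_neg (M : ℕ) (b : ℕ → ℝ → Mat N)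
    (f g : ℝ → Mat N) (k : ℤ) (hk : k < 0) (x : ℝ) :
    opMul ε (opMul ε (opMul ε (ofFun f) (gammaOp N)) (ofFun g)) (polyOp M b) k x
      = f x * polyOpAdjoint ε M b g (x + (k : ℝ) * ε) := by
  rw [opMul_polyOp_apply, polyOpAdjoint, Finset.mul_sum]
  refine Finset.sum_congr rfl fun n _ => ?_
  have hshift : x + ((k - n : ℤ) : ℝ) * ε = x + (k : ℝ) * ε - (n : ℝ) * ε := by
    push_cast
    ring
  rw [opMul_ofFun_apply, ofFun_opMul_gammaOp_apply, if_pos (by omega), hshift, mul_assoc]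

end

theorem negPart_f_Gamma_g_B_general
    (ε : ℝ) (N : ℕ) (M : ℕ)
    (b : ℕ → ℝ → Mat N) (f g : ℝ → Mat N) :
    let B : DOp N := fun k x => if 0 ≤ k ∧ k ≤ (M : ℤ) then b k.toNat x else 0
    let Gam : DOp N := fun k _ => if k < 0 then 1 else 0
    let Bstarg : ℝ → Mat N := fun x =>
      ∑ n ∈ Finset.range (M + 1), g (x - (n : ℝ) * ε) * b n (x - (n : ℝ) * ε)
    opNegPart (opMul ε (opMul ε (opMul ε (ofFun f) Gam) (ofFun g)) B)
        = opMul ε (opMul ε (ofFun f) Gam) (ofFun Bstarg)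
      ∧ ∀ m : ℤ, 1 ≤ m → ∀ x : ℝ,
        opMul ε (opMul ε (opMul ε (ofFun f) Gam) (ofFun g)) B (-m) x
          = f x * Bstarg (x - (m : ℝ) * ε) := by
  intro B Gam Bstarg
  have hneg := opMul_fGammaG_polyOp_apply_of_neg ε M b f g
  refine ⟨funext₂ fun k x => ?_, fun m hm x => ?_⟩
  · change opNegPart _ k x
      = opMul ε (opMul ε (ofFun f) (gammaOp N)) (ofFun (polyOpAdjoint ε M b g)) k x
    rw [opMul_ofFun_apply, ofFun_opMul_gammaOp_apply, opNegPart]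
    split_ifs with hk
    · exact hneg k hk x
    · exact (zero_mul _).symm
  · have hshift : x + ((-m : ℤ) : ℝ) * ε = x - (m : ℝ) * ε := by
      push_cast
      ring
    exact (hneg (-m) (by omega) x).trans (by rw [hshift]; rfl)

theorem negPart_f_Gamma_g_B
    (ε : ℝ) (hε : 0 < ε) (N : ℕ) (hN : 1 ≤ N) (M : ℕ)
    (b : ℕ → ℝ → Mat N) (f g : ℝ → Mat N) :
    let B : DOp N := fun k x => if 0 ≤ k ∧ k ≤ (M : ℤ) then b k.toNat x else 0
    let Gam : DOp N := fun k _ => if k < 0 then 1 else 0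
    let Bstarg : ℝ → Mat N := fun x =>
      ∑ n ∈ Finset.range (M + 1), g (x - (n : ℝ) * ε) * b n (x - (n : ℝ) * ε)
    opNegPart (opMul ε (opMul ε (opMul ε (ofFun f) Gam) (ofFun g)) B)
        = opMul ε (opMul ε (ofFun f) Gam) (ofFun Bstarg)
      ∧ ∀ m : ℤ, 1 ≤ m → ∀ x : ℝ,
        opMul ε (opMul ε (opMul ε (ofFun f) Gam) (ofFun g)) B (-m) x
          = f x * Bstarg (x - (m : ℝ) * ε) :=
  negPart_f_Gamma_g_B_general ε N M b f g
end
end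

section
/- Let C = Σ_{n=1}^{M} c_n(x)Λ^{−n} be a matrix difference operator with only strictly negative powers of Λ, and let f, g : ℝ → M_N(ℂ). Then the nonnegative part of the composed operator f ∘ Δ ∘ g ∘ C equals f ∘ Δ ∘ C*(g), where C*(g) : ℝ → M_N(ℂ) is the function C*(g)(x) = Σ_{n=1}^{M} g(x+nε) c_n(x+nε). Equivalently, for every m ≥ 0 the coefficient of Λ^{m} in f ∘ Δ ∘ g ∘ C equals f(x) · C*(g)(x+mε). -/
open Matrix

noncomputable section

/-!
STATEMENT 5: for a matrix difference operator `C = Σ_{n=1}^{M} cₙ(x)Λ⁻ⁿ` with only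
strictly negative powers of `Λ` and functions `f, g : ℝ → Mat N`, the nonnegative
part of `f ∘ Δ ∘ g ∘ C` equals `f ∘ Δ ∘ C*(g)`, where `Δ = Σ_{s≥0} Λˢ` and
`C*(g)(x) = Σ_{n=1}^{M} g(x+nε) cₙ(x+nε)`; equivalently, for every `m ≥ 0` the
coefficient of `Λᵐ` in `f ∘ Δ ∘ g ∘ C` equals `f(x) · C*(g)(x+mε)`.
-/

/-
Since `f·Δ·g = Σ_{k≥0} f(x) g(x+kε) Λᵏ` and `C` only lowers degrees by `1, …, M`, the coefficient of
`Λᵐ` (`m ≥ 0`) in `f·Δ·g·C` collects exactly the terms `f(x) g(x+(m+n)ε) cₙ(x+(m+n)ε)`, which is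
`f(x)·C*(g)(x+mε)`; on the other side, multiplying `f·Δ` on the right by the function `C*(g)`
shifts its argument by `mε` in degree `m`.
-/

namespace DOp

variable {N : ℕ} (ε : ℝ)

theorem opMul_ofFun_left (f : ℝ → Mat N) (A : DOp N) (k : ℤ) (x : ℝ) :
    opMul ε (ofFun f) A k x = f x * A k x := by
  rw [opMul, finsum_eq_single _ 0 fun i hi => by simp [ofFun, hi]]
  simp [ofFun]

theorem opMul_ofFun_right (A : DOp N) (g : ℝ → Mat N) (k : ℤ) (x : ℝ) :
    opMul ε A (ofFun g) k x = A k x * g (x + k * ε) := by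
  rw [opMul, finsum_eq_single _ k fun i hi => by simp [ofFun, sub_eq_zero, Ne.symm hi]]
  simp [ofFun]

theorem opMul_apply_eq_sum_of_support_subset (A B : DOp N) (S : Finset ℤ)
    (hB : ∀ j ∉ S, B j = 0) (m : ℤ) (x : ℝ) :
    opMul ε A B m x = ∑ j ∈ S, A (m - j) x * B j (x + ((m - j : ℤ) : ℝ) * ε) := by
  rw [opMul, ← finsum_comp_equiv (Equiv.subLeft m)
    (f := fun i : ℤ => A i x * B (m - i) (x + i * ε))]
  simp only [Equiv.subLeft_apply, sub_sub_cancel]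
  refine finsum_eq_finsetSum_of_support_subset _ fun j hj => ?_
  by_contra hjS
  simp [hB j hjS] at hj

/-- The operator `Σ_{n=1}^{M} cₙ(x) Λ⁻ⁿ`. -/
def ofNegCoeffs (M : ℕ) (c : ℕ → ℝ → Mat N) : DOp N :=
  fun k x => if -(M : ℤ) ≤ k ∧ k ≤ -1 then c (-k).toNat x else 0

theorem opMul_ofNegCoeffs_apply (A : DOp N) (M : ℕ) (c : ℕ → ℝ → Mat N) (m : ℤ) (x : ℝ) :
    opMul ε A (ofNegCoeffs M c) m x
      = ∑ n ∈ Finset.Icc 1 M, A (m + n) x * c n (x + ((m + n : ℤ) : ℝ) * ε) := by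
  have hsupp : ∀ j ∉ (Finset.Icc 1 M).image (fun n : ℕ => -(n : ℤ)), ofNegCoeffs M c j = 0 := by
    intro j hj
    ext1 x
    refine if_neg fun hjM => hj ?_
    simp only [Finset.mem_image, Finset.mem_Icc]
    exact ⟨(-j).toNat, by omega, by omega⟩
  rw [opMul_apply_eq_sum_of_support_subset ε A _ _ hsupp,
    Finset.sum_image fun a _ b _ hab => by simpa using hab]
  refine Finset.sum_congr rfl fun n hn => ?_
  rw [Finset.mem_Icc] at hn
  simp only [ofNegCoeffs, sub_neg_eq_add]
  rw [if_pos (by omega), neg_neg, Int.toNat_natCast]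

end DOp

open DOp

theorem posPart_f_Delta_g_C_general
    (ε : ℝ) (N : ℕ) (M : ℕ)
    (c : ℕ → ℝ → Mat N) (f g : ℝ → Mat N) :
    let C : DOp N := fun k x => if -(M : ℤ) ≤ k ∧ k ≤ -1 then c (-k).toNat x else 0
    let Del : DOp N := fun k _ => if 0 ≤ k then 1 else 0
    let Cstarg : ℝ → Mat N := fun x =>
      ∑ n ∈ Finset.Icc 1 M, g (x + (n : ℝ) * ε) * c n (x + (n : ℝ) * ε)
    opPosPart (opMul ε (opMul ε (opMul ε (ofFun f) Del) (ofFun g)) C)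
        = opMul ε (opMul ε (ofFun f) Del) (ofFun Cstarg)
      ∧ ∀ m : ℤ, 0 ≤ m → ∀ x : ℝ,
        opMul ε (opMul ε (opMul ε (ofFun f) Del) (ofFun g)) C m x
          = f x * Cstarg (x + (m : ℝ) * ε) := by
  intro C Del Cstarg
  have hfDel : ∀ k x, opMul ε (ofFun f) Del k x = if 0 ≤ k then f x else 0 := fun k x => by
    simp [opMul_ofFun_left, Del]
  have hcoeff : ∀ m : ℤ, 0 ≤ m → ∀ x : ℝ,
      opMul ε (opMul ε (opMul ε (ofFun f) Del) (ofFun g)) C m x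
        = f x * Cstarg (x + (m : ℝ) * ε) := by
    intro m hm x
    rw [show C = ofNegCoeffs M c from rfl, opMul_ofNegCoeffs_apply, Finset.mul_sum]
    refine Finset.sum_congr rfl fun n _ => ?_
    have hshift : x + ((m + n : ℤ) : ℝ) * ε = x + m * ε + n * ε := by push_cast; ring
    rw [opMul_ofFun_right, hfDel, if_pos (by omega), mul_assoc, hshift]
  refine ⟨funext₂ fun k x => ?_, hcoeff⟩
  rw [opPosPart, opMul_ofFun_right, hfDel]
  split_ifs with hk
  · exact hcoeff k hk x
  · rw [zero_mul]

theorem posPart_f_Delta_g_C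
    (ε : ℝ) (hε : 0 < ε) (N : ℕ) (hN : 1 ≤ N) (M : ℕ)
    (c : ℕ → ℝ → Mat N) (f g : ℝ → Mat N) :
    let C : DOp N := fun k x => if -(M : ℤ) ≤ k ∧ k ≤ -1 then c (-k).toNat x else 0
    let Del : DOp N := fun k _ => if 0 ≤ k then 1 else 0
    let Cstarg : ℝ → Mat N := fun x =>
      ∑ n ∈ Finset.Icc 1 M, g (x + (n : ℝ) * ε) * c n (x + (n : ℝ) * ε)
    opPosPart (opMul ε (opMul ε (opMul ε (ofFun f) Del) (ofFun g)) C)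
        = opMul ε (opMul ε (ofFun f) Del) (ofFun Cstarg)
      ∧ ∀ m : ℤ, 0 ≤ m → ∀ x : ℝ,
        opMul ε (opMul ε (opMul ε (ofFun f) Del) (ofFun g)) C m x
          = f x * Cstarg (x + (m : ℝ) * ε) :=
  posPart_f_Delta_g_C_general ε N M c f g
end
end

section
/- One-fold Darboux transformation of the extended multi-component Toda hierarchy. Let ε > 0, λ ∈ ℂ, and let u, v, φ : ℝ → M_N(ℂ) be such that φ(x) is invertible for every x and φ satisfies the spectral problem φ(x+ε) + u(x)φ(x) + v(x)φ(x−ε) = λ φ(x) for all x. Define a(x) = φ(x)φ(x−ε)⁻¹, u^{[1]}(x) = u(x) + a(x+ε) − a(x), and v^{[1]}(x) = a(x) v(x−ε) a(x−ε)⁻¹. Then the intertwining relation L^{[1]} W = W L holds, where W = I_N − a(x)Λ^{−1}, L = Λ + u + vΛ^{−1} and L^{[1]} = Λ + u^{[1]} + v^{[1]}Λ^{−1}; explicitly, for every function g : ℝ → M_N(ℂ) and every x: [g(x+ε) − a(x+ε)g(x)] + u^{[1]}(x)[g(x) − a(x)g(x−ε)] + v^{[1]}(x)[g(x−ε) − a(x−ε)g(x−2ε)]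 = [g(x+ε) + u(x)g(x) + v(x)g(x−ε)] − a(x)[g(x) + u(x−ε)g(x−ε) + v(x−ε)g(x−2ε)]. -/
/-!
The dressing coefficient `a = φ(x) φ(x−ε)⁻¹` of an eigenfunction `φ` of `L` satisfies the discrete
Riccati equation `a(x+ε) a(x) + u(x) a(x) + v(x) = λ a(x)`, obtained by multiplying the spectral
problem by `φ(x−ε)⁻¹` on the right. Expanding `L¹ W g − W L g` as a combination of the four shifts
of `g`, the coefficients of `g(x+ε)` and `g(x)` agree by the definition of `u¹`, that of
`g(x−2ε)` agrees by the definition of `v¹` since `a(x−ε)` is invertible, and that of `g(x−ε)`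
agrees by the Riccati equation at `x` and at `x−ε`.
-/

open Matrix
open scoped Ring

namespace Toda

variable {G R : Type*} [AddCommGroup G] [Ring R]

def laxOperator (u v : G → R) (ε : G) (g : G → R) (x : G) : R :=
  g (x + ε) + u x * g x + v x * g (x - ε)

def darbouxOperator (a : G → R) (ε : G) (g : G → R) (x : G) : R :=
  g x - a x * g (x - ε)

noncomputable def darbouxCoeff (φ : G → R) (ε : G) (x : G) : R :=
  φ x * (φ (x - ε))⁻¹ʳ

def darbouxU (u a : G → R) (ε : G) (x : G) : R :=
  u x + a (x + ε) - a x

noncomputable def darbouxV (v a : G → R) (ε : G) (x : G) : R :=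
  a x * v (x - ε) * (a (x - ε))⁻¹ʳ

lemma isUnit_darbouxCoeff {φ : G → R} (hφ : ∀ x, IsUnit (φ x)) (ε x : G) :
    IsUnit (darbouxCoeff φ ε x) :=
  (hφ x).mul (hφ (x - ε)).ringInverse

lemma darbouxCoeff_add_mul_darbouxCoeff {φ : G → R} (hφ : ∀ x, IsUnit (φ x)) (ε x : G) :
    darbouxCoeff φ ε (x + ε) * darbouxCoeff φ ε x = φ (x + ε) * (φ (x - ε))⁻¹ʳ := by
  simp only [darbouxCoeff, add_sub_cancel_right, mul_assoc, Ring.inverse_mul_cancel_left _ _ (hφ x)]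

variable {𝕜 : Type*} [CommSemiring 𝕜] [Algebra 𝕜 R]

lemma darbouxCoeff_riccati {u v φ : G → R} {ε : G} {lam : 𝕜} (hφ : ∀ x, IsUnit (φ x))
    (hspec : ∀ x, laxOperator u v ε φ x = lam • φ x) (x : G) :
    darbouxCoeff φ ε (x + ε) * darbouxCoeff φ ε x + u x * darbouxCoeff φ ε x + v x
      = lam • darbouxCoeff φ ε x := by
  have h := congrArg (· * (φ (x - ε))⁻¹ʳ) (hspec x)
  simp only [laxOperator, add_mul, smul_mul_assoc, mul_assoc,
    Ring.mul_inverse_cancel _ (hφ (x - ε)), mul_one] at h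
  rw [darbouxCoeff_add_mul_darbouxCoeff hφ]
  simpa only [darbouxCoeff, mul_assoc] using h

theorem laxOperator_darbouxOperator {u v a : G → R} {ε : G} {lam : 𝕜}
    (ha : ∀ x, IsUnit (a x))
    (hric : ∀ x, a (x + ε) * a x + u x * a x + v x = lam • a x) (g : G → R) (x : G) :
    laxOperator (darbouxU u a ε) (darbouxV v a ε) ε (darbouxOperator a ε g) x
      = darbouxOperator a ε (laxOperator u v ε g) x := by
  have hv : darbouxV v a ε x * a (x - ε) = a x * v (x - ε) := by
    rw [darbouxV, Ring.inverse_mul_cancel_right _ _ (ha _)]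
  have hric' : v (x - ε) * (a (x - ε))⁻¹ʳ = lam • 1 - a x - u (x - ε) := by
    have h := congrArg (· * (a (x - ε))⁻¹ʳ) (hric (x - ε))
    simp only [sub_add_cancel, add_mul, smul_mul_assoc, mul_assoc,
      Ring.mul_inverse_cancel _ (ha (x - ε)), mul_one] at h
    rw [← h]; abel
  have huv : darbouxV v a ε x - darbouxU u a ε x * a x = v x - a x * u (x - ε) := by
    rw [darbouxV, mul_assoc, hric', darbouxU]
    linear_combination (norm := noncomm_ring) - hric x
  calc laxOperator (darbouxU u a ε) (darbouxV v a ε) ε (darbouxOperator a ε g) x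
      = g (x + ε) + (darbouxU u a ε x - a (x + ε)) * g x
          + (darbouxV v a ε x - darbouxU u a ε x * a x) * g (x - ε)
          - darbouxV v a ε x * a (x - ε) * g (x - ε - ε) := by
        simp only [laxOperator, darbouxOperator, add_sub_cancel_right]; noncomm_ring
    _ = darbouxOperator a ε (laxOperator u v ε g) x := by
        rw [hv, huv, darbouxU]
        simp only [laxOperator, darbouxOperator, sub_add_cancel]; noncomm_ring

end Toda

open Toda in
theorem onefold_darboux_intertwining_general
    (N : ℕ) (ε : ℝ) (lam : ℂ)
    (u v φ : ℝ → Matrix (Fin N) (Fin N) ℂ)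
    (hφ : ∀ x : ℝ, IsUnit (φ x))
    (hspec : ∀ x : ℝ, φ (x + ε) + u x * φ x + v x * φ (x - ε) = lam • φ x) :
    ∀ (g : ℝ → Matrix (Fin N) (Fin N) ℂ) (x : ℝ),
      let a : ℝ → Matrix (Fin N) (Fin N) ℂ := fun y => φ y * (φ (y - ε))⁻¹
      let u1 : ℝ → Matrix (Fin N) (Fin N) ℂ := fun y => u y + a (y + ε) - a y
      let v1 : ℝ → Matrix (Fin N) (Fin N) ℂ := fun y => a y * v (y - ε) * (a (y - ε))⁻¹
      (g (x + ε) - a (x + ε) * g x)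
          + u1 x * (g x - a x * g (x - ε))
          + v1 x * (g (x - ε) - a (x - ε) * g (x - 2 * ε))
        = (g (x + ε) + u x * g x + v x * g (x - ε))
          - a x * (g x + u (x - ε) * g (x - ε) + v (x - ε) * g (x - 2 * ε)) := by
  intro g x
  have h := laxOperator_darbouxOperator (isUnit_darbouxCoeff hφ ε)
    (darbouxCoeff_riccati hφ hspec) g x
  simpa only [laxOperator, darbouxOperator, darbouxU, darbouxV, darbouxCoeff,
    ← nonsing_inv_eq_ringInverse, add_sub_cancel_right, sub_add_cancel,
    sub_sub, ← two_mul] using h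

theorem onefold_darboux_intertwining
    (N : ℕ) (ε : ℝ) (hε : 0 < ε) (lam : ℂ)
    (u v φ : ℝ → Matrix (Fin N) (Fin N) ℂ)
    (hφ : ∀ x : ℝ, IsUnit (φ x))
    (hspec : ∀ x : ℝ, φ (x + ε) + u x * φ x + v x * φ (x - ε) = lam • φ x) :
    ∀ (g : ℝ → Matrix (Fin N) (Fin N) ℂ) (x : ℝ),
      let a : ℝ → Matrix (Fin N) (Fin N) ℂ := fun y => φ y * (φ (y - ε))⁻¹
      let u1 : ℝ → Matrix (Fin N) (Fin N) ℂ := fun y => u y + a (y + ε) - a y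
      let v1 : ℝ → Matrix (Fin N) (Fin N) ℂ := fun y => a y * v (y - ε) * (a (y - ε))⁻¹
      (g (x + ε) - a (x + ε) * g x)
          + u1 x * (g x - a x * g (x - ε))
          + v1 x * (g (x - ε) - a (x - ε) * g (x - 2 * ε))
        = (g (x + ε) + u x * g x + v x * g (x - ε))
          - a x * (g x + u (x - ε) * g (x - ε) + v (x - ε) * g (x - 2 * ε)) :=
  onefold_darboux_intertwining_general N ε lam u v φ hφ hspec
end

section
/- The one-fold Darboux transformation preserves the spectral problem. Let ε > 0, λ, μ ∈ ℂ, and let u, v, φ, ψ : ℝ → M_N(ℂ) be such that φ(x) is invertible for every x, φ(x+ε) + u(x)φ(x) + v(x)φ(x−ε) = λ φ(x) for all x, and ψ(x+ε) + u(x)ψ(x) + v(x)ψ(x−ε) = μ ψ(x) for all x. Define a(x) = φ(x)φ(x−ε)⁻¹, u^{[1]}(x) = u(x) + a(x+ε) − a(x), v^{[1]}(x) = a(x) v(x−ε) a(x−ε)⁻¹, and ψ^{[1]}(x) = ψ(x) − a(x)ψ(x−ε). Then ψ^{[1]}(x+ε) + u^{[1]}(x)ψ^{[1]}(x) + v^{[1]}(x)ψ^{[1]}(x−ε)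 = μ ψ^{[1]}(x) for all x. In particular, taking ψ = φ gives ψ^{[1]} = 0. -/
/-!
STATEMENT 7: the one-fold Darboux transformation preserves the spectral
problem.  With `a(x) = φ(x)φ(x−ε)⁻¹`, `u¹ = u + a(x+ε) − a`,
`v¹(x) = a(x) v(x−ε) a(x−ε)⁻¹` and `ψ¹(x) = ψ(x) − a(x)ψ(x−ε)`, if
`Lψ = μψ` then `L¹ψ¹ = μψ¹`; in particular (second conjunct) taking `ψ = φ`
gives `φ − a·φ(·−ε) = 0`.
-/

open Matrix

set_option maxHeartbeats 1600000 in
theorem onefold_darboux_preserves_spectral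
    (N : ℕ) (ε : ℝ) (hε : 0 < ε) (lam mu : ℂ)
    (u v φ ψ : ℝ → Matrix (Fin N) (Fin N) ℂ)
    (hφ : ∀ x : ℝ, IsUnit (φ x))
    (hspecφ : ∀ x : ℝ, φ (x + ε) + u x * φ x + v x * φ (x - ε) = lam • φ x)
    (hspecψ : ∀ x : ℝ, ψ (x + ε) + u x * ψ x + v x * ψ (x - ε) = mu • ψ x) :
    let a : ℝ → Matrix (Fin N) (Fin N) ℂ := fun y => φ y * (φ (y - ε))⁻¹
    let u1 : ℝ → Matrix (Fin N) (Fin N) ℂ := fun y => u y + a (y + ε) - a y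
    let v1 : ℝ → Matrix (Fin N) (Fin N) ℂ := fun y => a y * v (y - ε) * (a (y - ε))⁻¹
    let ψ1 : ℝ → Matrix (Fin N) (Fin N) ℂ := fun y => ψ y - a y * ψ (y - ε)
    (∀ x : ℝ, ψ1 (x + ε) + u1 x * ψ1 x + v1 x * ψ1 (x - ε) = mu • ψ1 x)
      ∧ (∀ x : ℝ, φ x - a x * φ (x - ε) = 0) := by
  have hdet : ∀ y : ℝ, IsUnit (φ y).det := fun y => (Matrix.isUnit_iff_isUnit_det _).mp (hφ y)
  have hinvl : ∀ y : ℝ, (φ y)⁻¹ * φ y = 1 := fun y => Matrix.nonsing_inv_mul _ (hdet y)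
  have hinvr : ∀ y : ℝ, φ y * (φ y)⁻¹ = 1 := fun y => Matrix.mul_nonsing_inv _ (hdet y)
  intro a u1 v1 ψ1
  have ha_def : ∀ y : ℝ, a y = φ y * (φ (y - ε))⁻¹ := fun _ => rfl
  have ha_inv : ∀ y : ℝ, (a y)⁻¹ = φ (y - ε) * (φ y)⁻¹ := by
    intro y
    rw [ha_def, Matrix.mul_inv_rev, Matrix.nonsing_inv_nonsing_inv _ (hdet _)]
  have hainv_l : ∀ y : ℝ, (a y)⁻¹ * a y = 1 := by
    intro y
    rw [ha_inv, ha_def, mul_assoc, ← mul_assoc ((φ y)⁻¹), hinvl, one_mul, hinvr]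
  have hcons : ∀ x : ℝ, φ x - a x * φ (x - ε) = 0 := by
    intro x
    rw [ha_def, mul_assoc, hinvl, mul_one, sub_self]
  refine ⟨?_, hcons⟩
  intro x
  -- key algebraic identities
  have haa : a (x + ε) * a x = φ (x + ε) * (φ (x - ε))⁻¹ := by
    rw [ha_def, ha_def, add_sub_cancel_right, mul_assoc, ← mul_assoc ((φ x)⁻¹), hinvl, one_mul]
  have hd3 : a (x + ε) * a x + u x * a x + v x - lam • a x = 0 := by
    have h := congrArg (· * (φ (x - ε))⁻¹) (hspecφ x)
    simp only [add_mul, smul_mul_assoc] at h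
    rw [mul_assoc (v x), hinvr, mul_one, mul_assoc (u x), ← ha_def x, ← haa] at h
    rw [sub_eq_zero]
    exact h
  have hd4 : a x * a x + a x * u (x - ε) + a x * (v (x - ε) * (a (x - ε))⁻¹) - lam • a x = 0 := by
    have h := hspecφ (x - ε)
    rw [sub_add_cancel] at h
    have h2 := congrArg (· * (φ (x - ε))⁻¹) h
    simp only [add_mul, smul_mul_assoc] at h2
    rw [mul_assoc (u (x - ε)), hinvr, mul_one, mul_assoc (v (x - ε)), ← ha_inv (x - ε),
      ← ha_def x] at h2
    have h3 := congrArg (a x * ·) h2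
    simp only [mul_add, mul_smul_comm, mul_one] at h3
    rw [sub_eq_zero]
    exact h3
  have hd1 : ψ (x + ε) + u x * ψ x + v x * ψ (x - ε) - mu • ψ x = 0 :=
    sub_eq_zero.mpr (hspecψ x)
  have hd2 : ψ x + u (x - ε) * ψ (x - ε) + v (x - ε) * ψ (x - ε - ε) - mu • ψ (x - ε) = 0 := by
    have h := hspecψ (x - ε)
    rw [sub_add_cancel] at h
    exact sub_eq_zero.mpr h
  have hd5 : a x * v (x - ε) * ((a (x - ε))⁻¹ * a (x - ε)) - a x * v (x - ε) = 0 := by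
    rw [hainv_l, mul_one, sub_self]
  rw [← sub_eq_zero]
  simp only [ψ1, u1, v1]
  rw [add_sub_cancel_right]
  have key : (ψ (x + ε) - a (x + ε) * ψ x)
      + (u x + a (x + ε) - a x) * (ψ x - a x * ψ (x - ε))
      + (a x * v (x - ε) * (a (x - ε))⁻¹) * (ψ (x - ε) - a (x - ε) * ψ (x - ε - ε))
      - mu • (ψ x - a x * ψ (x - ε))
      = (ψ (x + ε) + u x * ψ x + v x * ψ (x - ε) - mu • ψ x)
        - a x * (ψ x + u (x - ε) * ψ (x - ε) + v (x - ε) * ψ (x - ε - ε) - mu • ψ (x - ε))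
        + ((a x * a x + a x * u (x - ε) + a x * (v (x - ε) * (a (x - ε))⁻¹) - lam • a x)
            - (a (x + ε) * a x + u x * a x + v x - lam • a x)) * ψ (x - ε)
        - (a x * v (x - ε) * ((a (x - ε))⁻¹ * a (x - ε)) - a x * v (x - ε)) * ψ (x - ε - ε) := by
    simp only [smul_sub, smul_add]
    noncomm_ring
  rw [key, hd1, hd2, hd3, hd4, hd5]
  simp only [mul_zero, zero_mul, sub_zero, sub_self, add_zero, zero_add]
end
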